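/- arXiv:1212.2690 — 8 statements merged into one kernel-verified Lean document; each statement's English description precedes it below -/
import Mathlib

section
/- Let {A,B} be a k-irreducible pair with |A| + |B| > 2, let a ∈ A and b ∈ B with a > b, and let C = (A \ {a}) ∪ {a − b} and D = B \ {b} (removing one copy of a and b respectively, and adding one copy of a − b to A's side). Then {C,D} is a k-irreducible pair. -/
/-- `{A,B}` is an irreducible pair: nonempty multisets of positive integers with equal
sums such that no nonempty proper submultisets `A' < A`, `B' < B` have equal sums. -/
def IrredPair (A B : Multiset ℕ) : Prop :=
  A ≠ 0 ∧ B ≠ 0 ∧ (∀ x ∈ A, 0 < x) ∧ (∀ x ∈ B, 0 < x) ∧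
  A.sum = B.sum ∧
  ∀ A' B' : Multiset ℕ, A' < A → B' < B → A' ≠ 0 → B' ≠ 0 → A'.sum ≠ B'.sum

/-- `{A,B}` is a `k`-irreducible pair: irreducible and all elements are at most `k`. -/
def KIrredPair (k : ℕ) (A B : Multiset ℕ) : Prop :=
  IrredPair A B ∧ (∀ x ∈ A, x ≤ k) ∧ (∀ x ∈ B, x ≤ k)

/-- Maximum element of a multiset of naturals (0 for the empty multiset). -/
def msetMax (S : Multiset ℕ) : ℕ := S.fold max 0

/-- A zero-sum multiset of integers is irreducible if it has no proper nonempty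
zero-sum submultiset. -/
def IrredZeroSum (S : Multiset ℤ) : Prop :=
  ¬ ∃ T : Multiset ℤ, T ≤ S ∧ T ≠ 0 ∧ T ≠ S ∧ T.sum = 0

theorem stmt2 (k : ℕ) (A B : Multiset ℕ) (h : KIrredPair k A B)
    (hlen : 2 < Multiset.card A + Multiset.card B)
    (a b : ℕ) (ha : a ∈ A) (hb : b ∈ B) (hab : a > b) :
    KIrredPair k ((a - b) ::ₘ A.erase a) (B.erase b) := by
  obtain ⟨⟨hA0, hB0, hApos, hBpos, hsum, hirr⟩, hAk, hBk⟩ := h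
  have hAe : a ::ₘ A.erase a = A := Multiset.cons_erase ha
  have hBe : b ::ₘ B.erase b = B := Multiset.cons_erase hb
  have hsumA : A.sum = a + (A.erase a).sum := by rw [← hAe]; simp
  have hsumB : B.sum = b + (B.erase b).sum := by rw [← hBe]; simp
  have haA : a ≤ A.sum := Multiset.single_le_sum (fun x _ => Nat.zero_le x) a ha
  refine ⟨⟨by simp, ?_, ?_, fun x hx => hBpos x (Multiset.mem_of_mem_erase hx), ?_, ?_⟩,
    ?_, fun x hx => hBk x (Multiset.mem_of_mem_erase hx)⟩
  · intro hD
    have : (B.erase b).sum = 0 := by rw [hD]; simp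
    omega
  · intro x hx
    rcases Multiset.mem_cons.mp hx with h' | h'
    · omega
    · exact hApos x (Multiset.mem_of_mem_erase h')
  · simp only [Multiset.sum_cons]; omega
  · intro C' D' hC' hD' hC0 hD0 hsum'
    have hD'B : D' < B := lt_of_lt_of_le hD' (Multiset.erase_le b B)
    by_cases hmem : (a - b) ∈ C'
    · have h1 : C'.erase (a - b) ≤ A.erase a := by
        have := Multiset.erase_le_erase (a - b) (le_of_lt hC')
        simpa using this
      have hA'le : a ::ₘ C'.erase (a - b) ≤ A := by
        calc a ::ₘ C'.erase (a - b) ≤ a ::ₘ A.erase a := Multiset.cons_le_cons a h1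
        _ = A := hAe
      have hA'ne : a ::ₘ C'.erase (a - b) ≠ A := by
        intro hEq
        apply ne_of_lt hC'
        have h2 : C'.erase (a - b) = A.erase a := by
          have := congrArg (Multiset.erase · a) hEq
          simpa using this
        rw [← Multiset.cons_erase hmem, h2]
      have hB'le : b ::ₘ D' ≤ B := by
        calc b ::ₘ D' ≤ b ::ₘ B.erase b := Multiset.cons_le_cons b (le_of_lt hD')
        _ = B := hBe
      have hB'ne : b ::ₘ D' ≠ B := by
        intro hEq
        apply ne_of_lt hD'
        have := congrArg (Multiset.erase · b) hEq
        simpa using this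
      have hCsum : C'.sum = (a - b) + (C'.erase (a - b)).sum := by
        conv_lhs => rw [← Multiset.cons_erase hmem]
        simp
      refine hirr (a ::ₘ C'.erase (a - b)) (b ::ₘ D')
        (lt_of_le_of_ne hA'le hA'ne) (lt_of_le_of_ne hB'le hB'ne)
        (by simp) (by simp) ?_
      simp only [Multiset.sum_cons]
      omega
    · have hle : C' ≤ A.erase a := by
        rw [Multiset.le_iff_count]
        intro x
        by_cases hx : x = a - b
        · subst hx; simp [Multiset.count_eq_zero_of_notMem hmem]
        · have := Multiset.count_le_of_le x (le_of_lt hC')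
          rwa [Multiset.count_cons_of_ne hx] at this
      have hAlt : A.erase a < A := by
        refine lt_of_le_of_ne (Multiset.erase_le a A) ?_
        intro hEq
        have h3 := congrArg (Multiset.count a) hEq
        rw [Multiset.count_erase_self] at h3
        have hc : 0 < Multiset.count a A := Multiset.count_pos.mpr ha
        omega
      exact hirr C' D' (lt_of_le_of_lt hle hAlt) hD'B hC0 hD0 hsum'
  · intro x hx
    rcases Multiset.mem_cons.mp hx with h' | h'
    · have := hAk a ha; omega
    · exact hAk x (Multiset.mem_of_mem_erase h')
end

section
/- Let {A,B} be a k-irreducible pair with |A| + |B| > 2, let a ∈ A and b ∈ B with b > a, and let C = A \ {a} and D = (B \ {b}) ∪ {b − a}. Then {C,D} is a k-irreducible pair. -/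
theorem stmt3 (k : ℕ) (A B : Multiset ℕ) (h : KIrredPair k A B)
    (hlen : 2 < Multiset.card A + Multiset.card B)
    (a b : ℕ) (ha : a ∈ A) (hb : b ∈ B) (hab : b > a) :
    KIrredPair k (A.erase a) ((b - a) ::ₘ B.erase b) := by
  obtain ⟨⟨hA0, hB0, hApos, hBpos, hsum, hirr⟩, hAk, hBk⟩ := h
  have hAeq : a ::ₘ A.erase a = A := Multiset.cons_erase ha
  have hBeq : b ::ₘ B.erase b = B := Multiset.cons_erase hb
  have hAs : a + (A.erase a).sum = A.sum := by
    conv_rhs => rw [← hAeq]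
    rw [Multiset.sum_cons]
  have hBs : b + (B.erase b).sum = B.sum := by
    conv_rhs => rw [← hBeq]
    rw [Multiset.sum_cons]
  have hC0 : A.erase a ≠ 0 := by
    intro h0
    have hsA : A.sum = a := by
      rw [← hAs, h0]; simp
    have hble : b ≤ B.sum := Multiset.single_le_sum (fun x _ => Nat.zero_le x) b hb
    omega
  refine ⟨⟨hC0, Multiset.cons_ne_zero, ?_, ?_, ?_, ?_⟩, ?_, ?_⟩
  · intro x hx; exact hApos x (Multiset.mem_of_mem_erase hx)
  · intro x hx
    rcases Multiset.mem_cons.mp hx with h1 | h2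
    · omega
    · exact hBpos x (Multiset.mem_of_mem_erase h2)
  · rw [Multiset.sum_cons]; omega
  · intro C' D' hC' hD' hC'0 hD'0 hsum'
    by_cases hmem : (b - a) ∈ D'
    · set D'' := D'.erase (b - a) with hD''
      have hD'eq : (b - a) ::ₘ D'' = D' := Multiset.cons_erase hmem
      have hD''le : D'' ≤ B.erase b := by
        have := Multiset.erase_le_erase (b - a) hD'.le
        simpa using this
      have hD''ne : D'' ≠ B.erase b := by
        intro he
        apply hD'.ne
        rw [← hD'eq, he]
      have h1 : a ::ₘ C' < A := by
        rw [← hAeq]; exact Multiset.cons_lt_cons _ hC'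
      have h2 : b ::ₘ D'' < B := by
        rw [← hBeq]; exact Multiset.cons_lt_cons _ (lt_of_le_of_ne hD''le hD''ne)
      apply hirr _ _ h1 h2 Multiset.cons_ne_zero Multiset.cons_ne_zero
      rw [Multiset.sum_cons, Multiset.sum_cons]
      have hd : D'.sum = (b - a) + D''.sum := by rw [← hD'eq, Multiset.sum_cons]
      omega
    · have hD'le : D' ≤ B.erase b := by
        rw [Multiset.le_iff_count]
        intro x
        have hc := Multiset.le_iff_count.mp hD'.le x
        rw [Multiset.count_cons] at hc
        by_cases hx : x = b - a
        · have h0 : Multiset.count x D' = 0 :=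
            Multiset.count_eq_zero_of_notMem (by rw [hx]; exact hmem)
          simp [h0]
        · simpa [hx] using hc
      exact hirr C' D' (lt_of_lt_of_le hC' (Multiset.erase_le a A))
        (lt_of_le_of_lt hD'le (Multiset.erase_lt.mpr hb)) hC'0 hD'0 hsum'
  · intro x hx; exact hAk x (Multiset.mem_of_mem_erase hx)
  · intro x hx
    rcases Multiset.mem_cons.mp hx with h1 | h2
    · have := hBk b hb; omega
    · exact hBk x (Multiset.mem_of_mem_erase h2)
end

section
/- If {A,B} is an irreducible pair of nonempty finite multisets of positive integers, then |A| ≤ max(B) and |B| ≤ max(A). -/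
lemma le_msetMax {S : Multiset ℕ} {x : ℕ} (hx : x ∈ S) : x ≤ msetMax S := by
  unfold msetMax
  induction S using Multiset.induction_on with
  | empty => simp at hx
  | cons a s ih =>
    rw [Multiset.fold_cons_left]
    rcases Multiset.mem_cons.1 hx with h | h
    · subst h; exact le_max_left _ _
    · exact le_trans (ih h) (le_max_right _ _)

/-- Key lemma: greedy interleaving plus pigeonhole, packaged as one strong induction.
`Au`/`Bu` are the already-consumed parts, `A`/`B` the remaining parts, and `V` the set
of imbalance states at which elements of `A` have been consumed so far. -/
lemma card_le_of_irred {A₀ B₀ : Multiset ℕ} {k : ℕ}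
    (hA₀pos : ∀ x ∈ A₀, 0 < x) (hB₀pos : ∀ x ∈ B₀, 0 < x)
    (hBk : ∀ x ∈ B₀, x ≤ k)
    (hsum : A₀.sum = B₀.sum)
    (hirr : ∀ A' B' : Multiset ℕ, A' < A₀ → B' < B₀ → A' ≠ 0 → B' ≠ 0 → A'.sum ≠ B'.sum)
    (hk : 1 ≤ k) :
    Multiset.card A₀ ≤ k := by
  suffices H : ∀ n (A B Au Bu : Multiset ℕ) (V : Finset ℤ),
      Multiset.card A + Multiset.card B = n →
      Au + A = A₀ → Bu + B = B₀ →
      (1 - (k : ℤ)) ≤ (Au.sum : ℤ) - (Bu.sum : ℤ) →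
      V ⊆ Finset.Icc (1 - (k : ℤ)) 0 →
      V.card = Multiset.card Au →
      (∀ v ∈ V, ∃ (A₁ B₁ : Multiset ℕ) (a₁ : ℕ),
        0 < a₁ ∧ A₁ + {a₁} ≤ Au ∧ B₁ ≤ Bu ∧ (A₁.sum : ℤ) - (B₁.sum : ℤ) = v) →
      Multiset.card Au + Multiset.card A ≤ k by
    have := H (Multiset.card A₀ + Multiset.card B₀) A₀ B₀ 0 0 ∅ rfl (by simp) (by simp)
      (by simp; omega) (by simp) (by simp) (by simp)
    simpa using this
  intro n
  induction n with
  | zero =>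
    intro A B Au Bu V hn hA hB hs hV hcard hHV
    have hA0 : Multiset.card A = 0 := by omega
    have hVcard : V.card ≤ (Finset.Icc (1 - (k : ℤ)) 0).card := Finset.card_le_card hV
    rw [Int.card_Icc] at hVcard
    have : ((0 : ℤ) + 1 - (1 - (k : ℤ))).toNat = k := by omega
    omega
  | succ n ih =>
    intro A B Au Bu V hn hA hB hs hV hcard hHV
    have hsums : Au.sum + A.sum = A₀.sum := by rw [← hA, Multiset.sum_add]
    have hsumsB : Bu.sum + B.sum = B₀.sum := by rw [← hB, Multiset.sum_add]
    by_cases hsle : (Au.sum : ℤ) - (Bu.sum : ℤ) ≤ 0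
    · -- the balance is nonpositive: consume an element from `A`
      have hAne : A ≠ 0 := by
        rintro rfl
        have hB0 : B.sum = 0 := by simp at hsums; omega
        have hBz : B = 0 := by
          rcases Multiset.empty_or_exists_mem B with h | ⟨b, hb⟩
          · exact h
          · have hbpos : 0 < b := hB₀pos b (by rw [← hB]; exact Multiset.mem_add.2 (Or.inr hb))
            have := Multiset.single_le_sum (fun x _ => Nat.zero_le x) b hb
            omega
        subst hBz
        simp at hn
      obtain ⟨a, ha⟩ := Multiset.exists_mem_of_ne_zero hAne
      have haA₀ : a ∈ A₀ := by rw [← hA]; exact Multiset.mem_add.2 (Or.inr ha)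
      have hapos : 0 < a := hA₀pos a haA₀
      have hAsumpos : 0 < A.sum := by
        have := Multiset.single_le_sum (fun x _ => Nat.zero_le x) a ha
        omega
      have hcA : Multiset.card A ≠ 0 := by simpa [Multiset.card_eq_zero] using hAne
      -- the current state is not in V, by irreducibility
      have hsV : ((Au.sum : ℤ) - (Bu.sum : ℤ)) ∉ V := by
        intro hmem
        obtain ⟨A₁, B₁, a₁, ha₁pos, hA₁, hB₁, hsum₁⟩ := hHV _ hmem
        have hA₁le : A₁ ≤ Au := le_trans (Multiset.le_add_right A₁ {a₁}) hA₁
        set A'' := Au - A₁ with hA''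
        set B'' := Bu - B₁ with hB''
        have h1 : A''.sum + A₁.sum = Au.sum := by
          rw [← Multiset.sum_add, tsub_add_cancel_of_le hA₁le]
        have h2 : B''.sum + B₁.sum = Bu.sum := by
          rw [← Multiset.sum_add, tsub_add_cancel_of_le hB₁]
        have heq : A''.sum = B''.sum := by omega
        have ha₁mem : a₁ ∈ A'' := by
          have : ({a₁} : Multiset ℕ) ≤ A'' := le_tsub_of_add_le_left hA₁
          exact Multiset.singleton_le.1 this
        have hA''ne : A'' ≠ 0 := fun h => by simp [h] at ha₁mem
        have hA''sumpos : 0 < A''.sum := by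
          have := Multiset.single_le_sum (fun x _ => Nat.zero_le x) a₁ ha₁mem
          omega
        have hB''ne : B'' ≠ 0 := by
          intro h
          rw [h] at heq
          simp at heq
          omega
        have hAusum : Au.sum < A₀.sum := by omega
        have hA''lt : A'' < A₀ := by
          refine lt_of_le_of_lt (tsub_le_self) ?_
          rw [← hA]
          refine lt_of_le_of_ne (Multiset.le_add_right Au A) ?_
          intro h
          have hcc : Multiset.card Au = Multiset.card Au + Multiset.card A := by
            conv_lhs => rw [h]
            rw [Multiset.card_add]
          omega
        have hB''lt : B'' < B₀ := by
          refine lt_of_le_of_ne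
            (le_trans tsub_le_self (by rw [← hB]; exact Multiset.le_add_right Bu B)) ?_
          intro h
          have hBB : B''.sum = B₀.sum := by rw [h]
          omega
        exact hirr A'' B'' hA''lt hB''lt hA''ne hB''ne heq
      -- apply the induction hypothesis
      have hce : Multiset.card (A.erase a) = Multiset.card A - 1 := by
        rw [Multiset.card_erase_of_mem ha]; rfl
      have := ih (A.erase a) B (Au + {a}) Bu (insert ((Au.sum : ℤ) - (Bu.sum : ℤ)) V)
        (by omega)
        (by rw [add_assoc, Multiset.singleton_add, Multiset.cons_erase ha]; exact hA)
        hB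
        (by rw [Multiset.sum_add, Multiset.sum_singleton]; omega)
        (by
          intro v hv
          rcases Finset.mem_insert.1 hv with h | h
          · subst h; exact Finset.mem_Icc.2 ⟨hs, hsle⟩
          · exact hV h)
        (by
          rw [Finset.card_insert_of_notMem hsV, Multiset.card_add, Multiset.card_singleton]
          omega)
        (by
          intro v hv
          rcases Finset.mem_insert.1 hv with h | h
          · exact ⟨Au, Bu, a, hapos, le_refl _, le_refl _, h ▸ rfl⟩
          · obtain ⟨A₁, B₁, a₁, h1, h2, h3, h4⟩ := hHV v h
            exact ⟨A₁, B₁, a₁, h1, le_trans h2 (Multiset.le_add_right Au {a}), h3, h4⟩)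
      rw [Multiset.card_add, Multiset.card_singleton] at this
      omega
    · -- the balance is positive: consume an element from `B`
      push_neg at hsle
      have hBne : B ≠ 0 := by
        rintro rfl
        simp at hsumsB
        omega
      obtain ⟨b, hb⟩ := Multiset.exists_mem_of_ne_zero hBne
      have hbB₀ : b ∈ B₀ := by rw [← hB]; exact Multiset.mem_add.2 (Or.inr hb)
      have hbk : b ≤ k := hBk b hbB₀
      have hce : Multiset.card (B.erase b) = Multiset.card B - 1 := by
        rw [Multiset.card_erase_of_mem hb]; rfl
      have hcB : Multiset.card B ≠ 0 := by simpa [Multiset.card_eq_zero] using hBne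
      exact ih A (B.erase b) Au (Bu + {b}) V
        (by omega)
        hA
        (by rw [add_assoc, Multiset.singleton_add, Multiset.cons_erase hb]; exact hB)
        (by rw [Multiset.sum_add, Multiset.sum_singleton]; omega)
        hV hcard
        (by
          intro v hv
          obtain ⟨A₁, B₁, a₁, h1, h2, h3, h4⟩ := hHV v hv
          exact ⟨A₁, B₁, a₁, h1, h2, le_trans h3 (Multiset.le_add_right Bu {b}), h4⟩)

theorem stmt5 (A B : Multiset ℕ) (h : IrredPair A B) :
    Multiset.card A ≤ msetMax B ∧ Multiset.card B ≤ msetMax A := by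
  obtain ⟨hA, hB, hApos, hBpos, hsum, hirr⟩ := h
  have hkB : 1 ≤ msetMax B := by
    obtain ⟨b, hb⟩ := Multiset.exists_mem_of_ne_zero hB
    exact le_trans (hBpos b hb) (le_msetMax hb)
  have hkA : 1 ≤ msetMax A := by
    obtain ⟨a, ha⟩ := Multiset.exists_mem_of_ne_zero hA
    exact le_trans (hApos a ha) (le_msetMax ha)
  constructor
  · exact card_le_of_irred hApos hBpos (fun x hx => le_msetMax hx) hsum hirr hkB
  · exact card_le_of_irred hBpos hApos (fun x hx => le_msetMax hx) hsum.symm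
      (fun A' B' h1 h2 h3 h4 e => hirr B' A' h2 h1 h4 h3 e.symm) hkA
end

section
/- For every integer k > 1, every k-irreducible pair {A,B} has length |A| + |B| ≤ 2k − 1, and this bound is attained; that is, ℓ(k) = 2k − 1. -/
/-!
Upper bound: order the elements of `A ∪ B` greedily, taking the next element from `A` while the
running difference `ΣA' - ΣB'` of the chosen prefixes is `≤ 0` and from `B` otherwise. If all
elements of `A` are at most `a` and all of `B` at most `b`, the running difference stays in
`[1 - b, a]`. Two equal running differences at different times would cut out a nontrivial
subpair of equal sums, so the `|A| + |B|` differences before the last step are distinct and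
`|A| + |B| ≤ a + b`. Unless `k` lies in both `A` and `B`, one of `a`, `b` can be taken `k - 1`;
if it lies in both, irreducibility forces `A = B = {k}`.

Lower bound: `k - 1` copies of `k` against `k` copies of `k - 1`, irreducible since
`k` and `k - 1` are coprime.
-/

open Multiset

lemma Multiset.eq_of_le_of_sum_le_of_pos {S T : Multiset ℕ} (hle : S ≤ T)
    (hT : ∀ x ∈ T, 0 < x) (hs : T.sum ≤ S.sum) : S = T := by
  obtain ⟨U, rfl⟩ := Multiset.le_iff_exists_add.1 hle
  have hU : ∀ x ∈ U, x = 0 := sum_eq_zero_iff.1 (by rw [sum_add] at hs; omega)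
  rw [eq_zero_of_forall_notMem fun x hx => (hT x (mem_add.2 (Or.inr hx))).ne' (hU x hx),
    add_zero]

lemma IrredPair.eq_zero_or_eq_of_sum_eq {A B U V : Multiset ℕ} (h : IrredPair A B)
    (hU : U ≤ A) (hV : V ≤ B) (hs : U.sum = V.sum) : (U = 0 ∧ V = 0) ∨ (U = A ∧ V = B) := by
  obtain ⟨-, -, hApos, hBpos, hAB, hirr⟩ := h
  have hUpos x (hx : x ∈ U) : 0 < x := hApos x (mem_of_le hU hx)
  have hVpos x (hx : x ∈ V) : 0 < x := hBpos x (mem_of_le hV hx)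
  by_cases hU0 : U = 0
  · subst hU0
    exact .inl ⟨rfl, (eq_of_le_of_sum_le_of_pos (zero_le V) hVpos (by simp [← hs])).symm⟩
  by_cases hUA : U = A
  · subst hUA
    exact .inr ⟨rfl, eq_of_le_of_sum_le_of_pos hV hBpos (hs ▸ hAB).ge⟩
  have hV0 : V ≠ 0 := by
    rintro rfl
    exact hU0 (eq_of_le_of_sum_le_of_pos (zero_le U) hUpos (by simp [hs])).symm
  have hVB : V ≠ B := by
    rintro rfl
    exact hUA (eq_of_le_of_sum_le_of_pos hU hApos (hs.trans hAB.symm).ge)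
  exact absurd hs (hirr U V (hU.lt_of_ne hUA) (hV.lt_of_ne hVB) hU0 hV0)

section GreedyWalk

variable {A B : Multiset ℕ} {a b : ℕ}

def sumDiff (s : Multiset ℕ × Multiset ℕ) : ℤ := s.1.sum - s.2.sum

def BalancedPrefix (A B : Multiset ℕ) (a b : ℕ) (s : Multiset ℕ × Multiset ℕ) : Prop :=
  s ≤ (A, B) ∧ sumDiff s ∈ Set.Icc (1 - b : ℤ) a

lemma BalancedPrefix.exists_succ (hAB : A.sum = B.sum) (hApos : ∀ x ∈ A, 0 < x)
    (hBpos : ∀ x ∈ B, 0 < x) (hA : ∀ x ∈ A, x ≤ a) (hB : ∀ x ∈ B, x ≤ b)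
    {s : Multiset ℕ × Multiset ℕ} (hs : BalancedPrefix A B a b s) (hne : s ≠ (A, B)) :
    ∃ t, s ≤ t ∧ BalancedPrefix A B a b t ∧ card t.1 + card t.2 = card s.1 + card s.2 + 1 := by
  obtain ⟨X, Y⟩ := s
  obtain ⟨⟨hX, hY⟩, hlo, hhi⟩ := hs
  simp only [sumDiff] at hlo hhi hX hY
  by_cases hd : (X.sum : ℤ) ≤ Y.sum
  · have hXA : X < A := hX.lt_of_ne fun hXA => hne <| by
      subst hXA
      rw [eq_of_le_of_sum_le_of_pos hY hBpos (by rw [← hAB]; exact_mod_cast hd)]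
    obtain ⟨x, hx⟩ := lt_iff_cons_le.1 hXA
    have hxa : x ≤ a := hA x (mem_of_le hx (mem_cons_self x X))
    refine ⟨(x ::ₘ X, Y), ⟨le_cons_self X x, le_rfl⟩, ⟨⟨hx, hY⟩, ?_, ?_⟩,
      by simp only [card_cons]; omega⟩ <;> simp only [sumDiff, sum_cons, Nat.cast_add] <;> omega
  · have hYB : Y < B := hY.lt_of_ne fun hYB => hne <| by
      subst hYB
      rw [eq_of_le_of_sum_le_of_pos hX hApos (by rw [hAB]; exact_mod_cast (not_le.1 hd).le)]
    obtain ⟨y, hy⟩ := lt_iff_cons_le.1 hYB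
    have hyb : y ≤ b := hB y (mem_of_le hy (mem_cons_self y Y))
    refine ⟨(X, y ::ₘ Y), ⟨le_rfl, le_cons_self Y y⟩, ⟨⟨hX, hy⟩, ?_, ?_⟩,
      by simp only [card_cons]; omega⟩ <;> simp only [sumDiff, sum_cons, Nat.cast_add] <;> omega

lemma exists_monotone_balanced_walk (hAB : A.sum = B.sum) (hApos : ∀ x ∈ A, 0 < x)
    (hBpos : ∀ x ∈ B, 0 < x) (hA : ∀ x ∈ A, x ≤ a) (hB : ∀ x ∈ B, x ≤ b) (hb : 0 < b) :
    ∃ w : ℕ → Multiset ℕ × Multiset ℕ, Monotone w ∧ ∀ i ≤ card A + card B,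
      BalancedPrefix A B a b (w i) ∧ card (w i).1 + card (w i).2 = i := by
  have hstep (s : Multiset ℕ × Multiset ℕ) : ∃ t, s ≤ t ∧ (BalancedPrefix A B a b s → s ≠ (A, B) →
      BalancedPrefix A B a b t ∧ card t.1 + card t.2 = card s.1 + card s.2 + 1) := by
    by_cases h : BalancedPrefix A B a b s ∧ s ≠ (A, B)
    · obtain ⟨t, hst, ht⟩ := h.1.exists_succ hAB hApos hBpos hA hB h.2
      exact ⟨t, hst, fun _ _ => ht⟩
    · exact ⟨s, le_rfl, fun h₁ h₂ => absurd ⟨h₁, h₂⟩ h⟩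
  choose f hf using hstep
  refine ⟨fun n => f^[n] (0, 0), monotone_nat_of_le_succ fun n => ?_, fun i hi => ?_⟩
  · rw [Function.iterate_succ_apply']
    exact (hf _).1
  dsimp only
  induction i with
  | zero =>
    refine ⟨⟨⟨Multiset.zero_le A, Multiset.zero_le B⟩, ?_, ?_⟩, by simp⟩ <;>
      simp only [Function.iterate_zero_apply, sumDiff, sum_zero, Nat.cast_zero, sub_zero] <;> omega
  | succ i ih =>
    obtain ⟨hbal, hcard⟩ := ih (by omega)
    have hne : f^[i] (0, 0) ≠ (A, B) := fun h => by simp only [h] at hcard; omega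
    rw [Function.iterate_succ_apply']
    obtain ⟨h₁, h₂⟩ := (hf _).2 hbal hne
    exact ⟨h₁, by omega⟩

lemma IrredPair.sumDiff_ne (h : IrredPair A B) {s t : Multiset ℕ × Multiset ℕ} (hst : s < t)
    (ht : t < (A, B)) : sumDiff s ≠ sumDiff t := by
  obtain ⟨X, Y⟩ := s
  obtain ⟨X', Y'⟩ := t
  obtain ⟨hXX', hYY'⟩ := hst.le
  obtain ⟨U, rfl⟩ := Multiset.le_iff_exists_add.1 hXX'
  obtain ⟨V, rfl⟩ := Multiset.le_iff_exists_add.1 hYY'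
  intro hd
  have hUV : U.sum = V.sum := by
    simp only [sumDiff, sum_add, Nat.cast_add] at hd
    omega
  obtain ⟨hXA, hYB⟩ := ht.le
  rcases h.eq_zero_or_eq_of_sum_eq ((le_add_left U X).trans hXA) ((le_add_left V Y).trans hYB)
    hUV with ⟨rfl, rfl⟩ | ⟨rfl, rfl⟩
  · simp at hst
  · exact ht.ne (Prod.ext ((le_add_left U X).antisymm hXA).symm
      ((le_add_left V Y).antisymm hYB).symm)

theorem IrredPair.card_add_card_le (h : IrredPair A B) (hA : ∀ x ∈ A, x ≤ a)
    (hB : ∀ x ∈ B, x ≤ b) : card A + card B ≤ a + b := by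
  obtain ⟨-, hB0, hApos, hBpos, hAB, -⟩ := id h
  obtain ⟨y, hy⟩ := exists_mem_of_ne_zero hB0
  obtain ⟨w, hw, hwalk⟩ := exists_monotone_balanced_walk hAB hApos hBpos hA hB
    ((hBpos y hy).trans_le (hB y hy))
  have hlt {i j} (hij : i < j) (hj : j ≤ card A + card B) : w i < w j :=
    (hw hij.le).lt_of_ne fun he => by
      have := (hwalk i (hij.le.trans hj)).2
      rw [he, (hwalk j hj).2] at this
      omega
  have hltAB {i} (hi : i < card A + card B) : w i < (A, B) :=
    (hwalk i hi.le).1.1.lt_of_ne fun he => by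
      have := (hwalk i hi.le).2
      simp only [he] at this
      omega
  have hinj : Set.InjOn (sumDiff ∘ w) (Finset.range (card A + card B)) := by
    intro i hi j hj hij
    simp only [Finset.coe_range, Set.mem_Iio] at hi hj
    by_contra hne
    rcases Nat.lt_or_gt_of_ne hne with hij' | hij'
    · exact h.sumDiff_ne (hlt hij' hj.le) (hltAB hj) hij
    · exact h.sumDiff_ne (hlt hij' hi.le) (hltAB hi) hij.symm
  have := Finset.card_le_card_of_injOn (sumDiff ∘ w) (t := Finset.Icc (1 - b : ℤ) a)
    (fun i hi => by simpa using (hwalk i (Finset.mem_range.1 hi).le).1.2) hinj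
  simp only [Finset.card_range, Int.card_Icc] at this
  omega

end GreedyWalk

lemma irredPair_replicate {a b : ℕ} (ha : 0 < a) (hb : 0 < b) (hab : a.Coprime b) :
    IrredPair (replicate b a) (replicate a b) := by
  refine ⟨card_pos.1 (by simpa using hb), card_pos.1 (by simpa using ha),
    fun x hx => eq_of_mem_replicate hx ▸ ha, fun x hx => eq_of_mem_replicate hx ▸ hb,
    by simp [mul_comm], ?_⟩
  intro U V hU hV hU0 _ hs
  obtain ⟨i, -, rfl⟩ := le_replicate_iff.1 hU.le
  obtain ⟨j, -, rfl⟩ := le_replicate_iff.1 hV.le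
  simp only [sum_replicate, smul_eq_mul] at hs
  have hbi : b ∣ i := hab.symm.dvd_of_dvd_mul_right ⟨j, by rw [hs, mul_comm]⟩
  have hi0 : i ≠ 0 := by rintro rfl; exact hU0 (replicate_zero a)
  have hib : i < b := by simpa using card_lt_card hU
  exact hib.not_ge (Nat.le_of_dvd (Nat.pos_of_ne_zero hi0) hbi)

lemma le_pred_of_forall_le_of_notMem {S : Multiset ℕ} {k : ℕ} (hS : ∀ x ∈ S, x ≤ k)
    (hk : k ∉ S) : ∀ x ∈ S, x ≤ k - 1 :=
  fun x hx => Nat.le_sub_one_of_lt ((hS x hx).lt_of_ne fun h => hk (h ▸ hx))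

theorem stmt6 (k : ℕ) (hk : 1 < k) :
    (∀ A B : Multiset ℕ, KIrredPair k A B →
      Multiset.card A + Multiset.card B ≤ 2 * k - 1) ∧
    (∃ A B : Multiset ℕ, KIrredPair k A B ∧
      Multiset.card A + Multiset.card B = 2 * k - 1) := by
  refine ⟨fun A B ⟨h, hA, hB⟩ => ?_, ?_⟩
  · by_cases hkA : k ∈ A
    · by_cases hkB : k ∈ B
      · rcases h.eq_zero_or_eq_of_sum_eq (singleton_le.2 hkA) (singleton_le.2 hkB) rfl with
          ⟨h0, -⟩ | ⟨rfl, rfl⟩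
        · exact absurd h0 (singleton_ne_zero k)
        · simp only [card_singleton]
          omega
      · have := h.card_add_card_le hA (le_pred_of_forall_le_of_notMem hB hkB)
        omega
    · have := h.card_add_card_le (le_pred_of_forall_le_of_notMem hA hkA) hB
      omega
  · have hcop : k.Coprime (k - 1) := (Nat.coprime_self_sub_right hk.le).2 (Nat.coprime_one_right k)
    refine ⟨replicate (k - 1) k, replicate k (k - 1),
      ⟨irredPair_replicate (by omega) (by omega) hcop, fun x hx => (eq_of_mem_replicate hx).le,
        fun x hx => (eq_of_mem_replicate hx).trans_le (Nat.sub_le k 1)⟩, ?_⟩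
    simp only [card_replicate]
    omega
end

section
/- Let k > 1 be an integer. A k-irreducible pair {A,B} satisfies |A| + |B| = 2k − 1 if and only if (up to swapping A and B) A consists of k−1 copies of k and B consists of k copies of k−1. -/
/-!
Identify `{A, B}` with the zero-sum multiset `A ∪ (-B)` of integers; irreducibility says that
it has no proper nonempty zero-sum submultiset. An element common to `A` and `B` would make
both singletons, so up to symmetry `k ∉ B`. Then order `A ∪ (-B)` greedily, starting with any
`-b`: step up when the running sum is negative and down otherwise. The running sums before
each step stay in `[-(k-1), k-1]` and are pairwise distinct (two equal ones enclose a zero-sum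
block), so the `2k - 1` of them fill this interval exactly. Up-steps are taken exactly at the
`k - 1` negative sums, so `|A| = k - 1`; and `-(k-1)` can only be reached by a down-step from
`0`, i.e. by the first step, so `b = k - 1`. Comparing sums then forces every element of `A`
to be `k`.
-/

theorem Multiset.exists_le_map_eq_of_le_map {α β : Type*} {f : α → β} {s : Multiset α}
    {t : Multiset β} (h : t ≤ s.map f) : ∃ u ≤ s, u.map f = t := by
  obtain ⟨s⟩ := s
  obtain ⟨t⟩ := t
  obtain ⟨l, hperm, hsub⟩ := Multiset.coe_le.1 h
  obtain ⟨l', hl', rfl⟩ := List.sublist_map_iff.1 hsub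
  exact ⟨l', Multiset.coe_le.2 hl'.subperm, Multiset.coe_eq_coe.2 hperm⟩

theorem Multiset.exists_le_le_eq_add_of_le_add {α : Type*} [DecidableEq α] {s t u : Multiset α}
    (h : u ≤ s + t) : ∃ s' ≤ s, ∃ t' ≤ t, u = s' + t' :=
  ⟨u ∩ s, Multiset.inter_le_right, u - s, tsub_le_iff_left.2 h,
    by rw [add_comm, Multiset.sub_add_inter]⟩

theorem Multiset.eq_of_le_of_sum_le {s t : Multiset ℕ} (hst : s ≤ t) (ht : ∀ x ∈ t, 0 < x)
    (hsum : t.sum ≤ s.sum) : s = t := by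
  obtain ⟨u, rfl⟩ := Multiset.le_iff_exists_add.1 hst
  have hu : ∀ x ∈ u, x = 0 := Multiset.sum_eq_zero_iff.1 (by simp at hsum; omega)
  suffices u = 0 by simp [this]
  exact Multiset.eq_zero_of_forall_notMem fun x hx =>
    (ht x (Multiset.mem_add.2 (Or.inr hx))).ne' (hu x hx)

theorem Multiset.eq_replicate_of_sum_eq {s : Multiset ℕ} {c : ℕ} (hs : ∀ x ∈ s, x ≤ c)
    (hsum : s.sum = Multiset.card s * c) : s = Multiset.replicate (Multiset.card s) c := by
  refine Multiset.eq_replicate_card.2 fun x hx => (hs x hx).antisymm ?_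
  by_contra! hlt
  obtain ⟨t, rfl⟩ := Multiset.exists_cons_of_mem hx
  have ht := Multiset.sum_le_card_nsmul t c fun y hy => hs y (Multiset.mem_cons_of_mem hy)
  simp only [Multiset.sum_cons, Multiset.card_cons, smul_eq_mul] at hsum ht
  nlinarith

theorem IrredPair.symm {A B : Multiset ℕ} (h : IrredPair A B) : IrredPair B A := by
  obtain ⟨hA, hB, hApos, hBpos, hsum, hirr⟩ := h
  exact ⟨hB, hA, hBpos, hApos, hsum.symm,
    fun B' A' hB' hA' hB'0 hA'0 hs => hirr A' B' hA' hB' hA'0 hB'0 hs.symm⟩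

theorem IrredPair.eq_singleton_of_mem_of_mem {A B : Multiset ℕ} {x : ℕ} (h : IrredPair A B)
    (hxA : x ∈ A) (hxB : x ∈ B) : A = {x} ∧ B = {x} := by
  obtain ⟨-, -, hApos, hBpos, hsum, hirr⟩ := h
  have hA : {x} ≤ A := Multiset.singleton_le.2 hxA
  have hB : {x} ≤ B := Multiset.singleton_le.2 hxB
  rcases hA.lt_or_eq with hltA | rfl
  · rcases hB.lt_or_eq with hltB | rfl
    · exact absurd rfl (hirr _ _ hltA hltB (by simp) (by simp))
    · exact ⟨(Multiset.eq_of_le_of_sum_le hA hApos (by simp [hsum])).symm, rfl⟩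
  · exact ⟨rfl, (Multiset.eq_of_le_of_sum_le hB hBpos (by simp [← hsum])).symm⟩

def signedUnion (A B : Multiset ℕ) : Multiset ℤ :=
  A.map ((↑) : ℕ → ℤ) + B.map fun b : ℕ => -(b : ℤ)

theorem sum_signedUnion (A B : Multiset ℕ) :
    (signedUnion A B).sum = (A.sum : ℤ) - B.sum := by
  simp [signedUnion, Multiset.sum_map_neg, Nat.cast_multiset_sum, sub_eq_add_neg]

theorem card_signedUnion (A B : Multiset ℕ) :
    Multiset.card (signedUnion A B) = Multiset.card A + Multiset.card B := by
  simp [signedUnion]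

theorem countP_pos_signedUnion {A : Multiset ℕ} (hA : ∀ a ∈ A, 0 < a) (B : Multiset ℕ) :
    (signedUnion A B).countP (0 < ·) = Multiset.card A := by
  rw [signedUnion, Multiset.countP_add, Multiset.countP_eq_card.2 (by simpa using hA),
    Multiset.countP_eq_zero.2 (by simp), add_zero, Multiset.card_map]

theorem ne_zero_of_mem_signedUnion {A B : Multiset ℕ} (hA : ∀ a ∈ A, 0 < a)
    (hB : ∀ b ∈ B, 0 < b) : ∀ z ∈ signedUnion A B, z ≠ 0 := by
  intro z hz
  simp only [signedUnion, Multiset.mem_add, Multiset.mem_map] at hz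
  rcases hz with ⟨a, ha, rfl⟩ | ⟨b, hb, rfl⟩
  · exact_mod_cast (hA a ha).ne'
  · simpa using (hB b hb).ne'

theorem le_signedUnion_iff {A B : Multiset ℕ} {T : Multiset ℤ} :
    T ≤ signedUnion A B ↔ ∃ A' ≤ A, ∃ B' ≤ B, T = signedUnion A' B' := by
  refine ⟨fun hT => ?_, ?_⟩
  · obtain ⟨P, hP, N, hN, rfl⟩ := Multiset.exists_le_le_eq_add_of_le_add hT
    obtain ⟨A', hA', rfl⟩ := Multiset.exists_le_map_eq_of_le_map hP
    obtain ⟨B', hB', rfl⟩ := Multiset.exists_le_map_eq_of_le_map hN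
    exact ⟨A', hA', B', hB', rfl⟩
  · rintro ⟨A', hA', B', hB', rfl⟩
    exact add_le_add (Multiset.map_le_map hA') (Multiset.map_le_map hB')

theorem IrredPair.irredZeroSum_signedUnion {A B : Multiset ℕ} (h : IrredPair A B) :
    IrredZeroSum (signedUnion A B) := by
  obtain ⟨-, -, hApos, hBpos, hsum, hirr⟩ := h
  rintro ⟨T, hT, hT0, hTS, hTsum⟩
  obtain ⟨A', hA', B', hB', rfl⟩ := le_signedUnion_iff.1 hT
  have hs : A'.sum = B'.sum := by rw [sum_signedUnion] at hTsum; omega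
  have hA'B : A' = A → B' = B := fun hAA =>
    Multiset.eq_of_le_of_sum_le hB' hBpos (by rw [← hs, hAA, hsum])
  have hB'A : B' = B → A' = A := fun hBB =>
    Multiset.eq_of_le_of_sum_le hA' hApos (by rw [hs, hBB, hsum])
  have hA'pos : ∀ a ∈ A', 0 < a := fun a ha => hApos a (Multiset.mem_of_le hA' ha)
  have hB'pos : ∀ b ∈ B', 0 < b := fun b hb => hBpos b (Multiset.mem_of_le hB' hb)
  have hA'0 : A' ≠ 0 := by
    rintro rfl
    have hB'0 := Multiset.eq_of_le_of_sum_le (Multiset.zero_le B') hB'pos (by simp [← hs])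
    exact hT0 (by simp [signedUnion, ← hB'0])
  have hB'0 : B' ≠ 0 := by
    rintro rfl
    exact hA'0 (Multiset.eq_of_le_of_sum_le (Multiset.zero_le A') hA'pos (by simp [hs])).symm
  refine hirr A' B' (hA'.lt_of_ne fun hAA => hTS ?_) (hB'.lt_of_ne fun hBB => hTS ?_) hA'0 hB'0 hs
  · rw [hAA, hA'B hAA]
  · rw [hBB, hB'A hBB]

theorem IrredZeroSum.mono {S T : Multiset ℤ} (hS : IrredZeroSum S) (hTS : T ≤ S) :
    IrredZeroSum T := by
  rintro ⟨U, hUT, hU0, hUT', hU⟩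
  exact hS ⟨U, hUT.trans hTS, hU0, fun hUS => hUT' (hUT.antisymm (hUS ▸ hTS)), hU⟩

def IsGreedyWalk : ℤ → List ℤ → Prop
  | _, [] => True
  | d, z :: l => (if d < 0 then 0 < z else z < 0) ∧ IsGreedyWalk (d + z) l

/-- The final position `d + l.sum` is not listed. -/
def walkPositions : ℤ → List ℤ → List ℤ
  | _, [] => []
  | d, z :: l => d :: walkPositions (d + z) l

theorem length_walkPositions (d : ℤ) (l : List ℤ) : (walkPositions d l).length = l.length := by
  induction l generalizing d with
  | nil => rfl
  | cons z l ih => simp [walkPositions, ih]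

theorem exists_take_of_mem_walkPositions {d v : ℤ} {l : List ℤ} (hv : v ∈ walkPositions d l) :
    ∃ i < l.length, d + (l.take i).sum = v := by
  induction l generalizing d with
  | nil => simp [walkPositions] at hv
  | cons z l ih =>
    rcases List.mem_cons.1 hv with rfl | hv
    · exact ⟨0, by simp⟩
    · obtain ⟨i, hi, rfl⟩ := ih hv
      exact ⟨i + 1, by simpa using hi, by simp [add_assoc]⟩

/-- Below `0` the remaining steps have positive sum, so an up-step is available; at or above
`0` their sum is nonpositive, so a down-step is. -/
theorem exists_isGreedyWalk (S : Multiset ℤ) (hS : ∀ z ∈ S, z ≠ 0) (d : ℤ)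
    (hd : d + S.sum = 0) :
    ∃ l : List ℤ, IsGreedyWalk d l ∧ (l : Multiset ℤ) = S := by
  induction S using Multiset.strongInductionOn generalizing d with
  | ih S ih =>
    rcases eq_or_ne S 0 with rfl | hS0
    · exact ⟨[], trivial, rfl⟩
    obtain ⟨z, hz, hstep⟩ : ∃ z ∈ S, if d < 0 then 0 < z else z < 0 := by
      split_ifs with hd0
      · by_contra! hnonpos
        have := Multiset.sum_le_card_nsmul S 0 hnonpos
        simp only [smul_zero] at this
        omega
      · by_contra! hnonneg
        have hcard := Multiset.card_nsmul_le_sum (a := 1) fun z hz =>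
          lt_of_le_of_ne (hnonneg z hz) (hS z hz).symm
        have hpos := Multiset.card_pos.2 hS0
        simp only [nsmul_eq_mul, mul_one] at hcard
        omega
    obtain ⟨l, hl, hlS⟩ := ih (S.erase z) (Multiset.erase_lt.2 hz)
      (fun w hw => hS w (Multiset.mem_of_mem_erase hw)) (d + z)
      (by rw [← Multiset.cons_erase hz, Multiset.sum_cons] at hd; linarith)
    exact ⟨z :: l, ⟨hstep, hl⟩, by rw [← Multiset.cons_coe, hlS, Multiset.cons_erase hz]⟩

theorem exists_isGreedyWalk_cons {S : Multiset ℤ} (hS : ∀ z ∈ S, z ≠ 0) (hsum : S.sum = 0)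
    {z : ℤ} (hz : z ∈ S) (hz0 : z < 0) :
    ∃ l : List ℤ, IsGreedyWalk 0 (z :: l) ∧ ((z :: l : List ℤ) : Multiset ℤ) = S := by
  obtain ⟨l, hl, hlS⟩ := exists_isGreedyWalk (S.erase z)
    (fun w hw => hS w (Multiset.mem_of_mem_erase hw)) z (by rw [Multiset.sum_erase hz, hsum])
  exact ⟨l, ⟨by simpa using hz0, by simpa using hl⟩,
    by rw [← Multiset.cons_coe, hlS, Multiset.cons_erase hz]⟩

/-- Two equal positions of a walk would enclose a zero-sum block of steps. -/
theorem nodup_walkPositions_of_irredZeroSum {d : ℤ} {l : List ℤ}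
    (hl : IrredZeroSum (l : Multiset ℤ)) : (walkPositions d l).Nodup := by
  induction l generalizing d with
  | nil => exact List.nodup_nil
  | cons z l ih =>
    refine List.nodup_cons.2 ⟨fun hd => ?_, ih (hl.mono ?_)⟩
    · obtain ⟨i, hi, hsum⟩ := exists_take_of_mem_walkPositions hd
      refine hl ⟨(z :: l.take i : List ℤ), ?_, by simp, fun h => ?_, ?_⟩
      · exact Multiset.coe_le.2 ((List.take_sublist i l).cons_cons z).subperm
      · have := congrArg Multiset.card h
        simp only [Multiset.coe_card, List.length_cons, List.length_take] at this
        omega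
      · simp only [Multiset.sum_coe, List.sum_cons]
        linarith
    · exact Multiset.coe_le.2 (List.sublist_cons_self z l).subperm

theorem List.countP_neg_eq_of_toFinset_eq_Icc {m : ℕ} {l : List ℤ} (hl : l.Nodup)
    (h : l.toFinset = Finset.Icc (-(m : ℤ)) m) : l.countP (· < 0) = m := by
  have hneg : {x ∈ Finset.Icc (-(m : ℤ)) m | decide (x < 0) = true} =
      Finset.Icc (-(m : ℤ)) (-1) := by
    ext x
    simp only [Finset.mem_filter, Finset.mem_Icc, decide_eq_true_eq]
    omega
  rw [List.countP_eq_length_filter, ← List.toFinset_card_of_nodup (hl.filter _),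
    List.toFinset_filter, h, hneg, Int.card_Icc]
  omega

namespace IsGreedyWalk

theorem mem_Icc_of_mem_walkPositions {m d : ℤ} {l : List ℤ} (hl : IsGreedyWalk d l)
    (hz : ∀ z ∈ l, -m ≤ z ∧ z ≤ m + 1) (hd : -m ≤ d ∧ d ≤ m) :
    ∀ v ∈ walkPositions d l, -m ≤ v ∧ v ≤ m := by
  induction l generalizing d with
  | nil => simp [walkPositions]
  | cons z l ih =>
    obtain ⟨hstep, hl⟩ := hl
    have hzb := hz z List.mem_cons_self
    intro v hv
    rcases List.mem_cons.1 hv with rfl | hv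
    · exact hd
    · exact ih hl (fun w hw => hz w (List.mem_cons_of_mem z hw))
        (by split_ifs at hstep <;> omega) v hv

/-- Down-steps then start from a position `≥ 1`, so no position reaches `-m`. -/
theorem lt_of_mem_walkPositions {m d : ℤ} {l : List ℤ} (hl : IsGreedyWalk d l)
    (hz : ∀ z ∈ l, -m ≤ z) (hd : -m < d) (h0 : 0 ∉ walkPositions d l) :
    ∀ v ∈ walkPositions d l, -m < v := by
  induction l generalizing d with
  | nil => simp [walkPositions]
  | cons z l ih =>
    obtain ⟨hstep, hl⟩ := hl
    have hzb := hz z List.mem_cons_self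
    have hd0 : d ≠ 0 := fun h => h0 (h ▸ List.mem_cons_self)
    intro v hv
    rcases List.mem_cons.1 hv with rfl | hv
    · exact hd
    · exact ih hl (fun w hw => hz w (List.mem_cons_of_mem z hw))
        (by split_ifs at hstep <;> omega) (fun h => h0 (List.mem_cons_of_mem d h)) v hv

theorem countP_pos_eq {d : ℤ} {l : List ℤ} (hl : IsGreedyWalk d l) :
    l.countP (0 < ·) = (walkPositions d l).countP (· < 0) := by
  induction l generalizing d with
  | nil => rfl
  | cons z l ih =>
    obtain ⟨hstep, hl⟩ := hl
    simp only [walkPositions, List.countP_cons, ih hl]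
    split_ifs at hstep with hd
    · simp [hd, hstep]
    · simp [hd, hstep.le]

theorem toFinset_walkPositions_eq_Icc {m : ℕ} {l : List ℤ} (hl : IsGreedyWalk 0 l)
    (hirr : IrredZeroSum (l : Multiset ℤ)) (hz : ∀ z ∈ l, -(m : ℤ) ≤ z ∧ z ≤ m + 1)
    (hlen : l.length = 2 * m + 1) :
    (walkPositions 0 l).toFinset = Finset.Icc (-(m : ℤ)) m := by
  refine Finset.eq_of_subset_of_card_le (fun v hv => ?_) ?_
  · exact Finset.mem_Icc.2
      (hl.mem_Icc_of_mem_walkPositions hz (by omega) v (List.mem_toFinset.1 hv))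
  · rw [List.toFinset_card_of_nodup (nodup_walkPositions_of_irredZeroSum hirr),
      length_walkPositions, hlen, Int.card_Icc]
    omega

theorem head_eq_neg {m : ℕ} (hm : 0 < m) {z : ℤ} {l : List ℤ}
    (hl : IsGreedyWalk 0 (z :: l)) (hirr : IrredZeroSum ((z :: l : List ℤ) : Multiset ℤ))
    (hz : ∀ w ∈ z :: l, -(m : ℤ) ≤ w) (hmin : -(m : ℤ) ∈ walkPositions 0 (z :: l)) :
    z = -m := by
  have hnodup := nodup_walkPositions_of_irredZeroSum (d := 0) hirr
  simp only [walkPositions, zero_add, List.nodup_cons] at hnodup hmin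
  have hl' : IsGreedyWalk z l := by simpa using hl.2
  by_contra hne
  exact lt_irrefl _ <| hl'.lt_of_mem_walkPositions (fun w hw => hz w (List.mem_cons_of_mem z hw))
    (lt_of_le_of_ne (hz z List.mem_cons_self) (Ne.symm hne)) hnodup.1 (-(m : ℤ))
    ((List.mem_cons.1 hmin).resolve_left (by omega))

end IsGreedyWalk

theorem IrredPair.eq_pred_and_card_eq_pred {k : ℕ} {A B : Multiset ℕ} (h : IrredPair A B)
    (hA : ∀ a ∈ A, a ≤ k) (hB : ∀ b ∈ B, b < k)
    (hcard : Multiset.card A + Multiset.card B = 2 * k - 1) {b : ℕ} (hb : b ∈ B) :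
    b = k - 1 ∧ Multiset.card A = k - 1 := by
  have hS := h.irredZeroSum_signedUnion
  obtain ⟨hA0, hB0, hApos, hBpos, hsum, -⟩ := h
  have hk : 2 ≤ k := by
    have := Multiset.card_pos.2 hA0
    have := Multiset.card_pos.2 hB0
    omega
  have hbS : -(b : ℤ) ∈ signedUnion A B :=
    Multiset.mem_add.2 (Or.inr (Multiset.mem_map_of_mem _ hb))
  obtain ⟨l, hl, hlS⟩ := exists_isGreedyWalk_cons (ne_zero_of_mem_signedUnion hApos hBpos)
    (by rw [sum_signedUnion, hsum, sub_self]) hbS (by simpa using hBpos b hb)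
  have hirr : IrredZeroSum ((-(b : ℤ) :: l : List ℤ) : Multiset ℤ) := hlS ▸ hS
  have hz : ∀ z ∈ -(b : ℤ) :: l,
      -((k - 1 : ℕ) : ℤ) ≤ z ∧ z ≤ ((k - 1 : ℕ) : ℤ) + 1 := by
    intro z hz
    rw [← Multiset.mem_coe, hlS, signedUnion, Multiset.mem_add, Multiset.mem_map,
      Multiset.mem_map] at hz
    rcases hz with ⟨a, ha, rfl⟩ | ⟨b', hb', rfl⟩
    · have := hA a ha
      omega
    · have := hB b' hb'
      omega
  have hlen : (-(b : ℤ) :: l).length = 2 * (k - 1) + 1 := by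
    rw [← Multiset.coe_card, hlS, card_signedUnion]
    omega
  have hIcc := hl.toFinset_walkPositions_eq_Icc hirr hz hlen
  constructor
  · have := hl.head_eq_neg (m := k - 1) (by omega) hirr (fun z hz' => (hz z hz').1)
      (by rw [← List.mem_toFinset, hIcc]; simp)
    omega
  · rw [← countP_pos_signedUnion hApos B, ← hlS, Multiset.coe_countP, hl.countP_pos_eq,
      List.countP_neg_eq_of_toFinset_eq_Icc (nodup_walkPositions_of_irredZeroSum hirr) hIcc]

theorem IrredPair.eq_replicate_of_forall_lt {k : ℕ} {A B : Multiset ℕ} (h : IrredPair A B)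
    (hA : ∀ a ∈ A, a ≤ k) (hB : ∀ b ∈ B, b < k)
    (hcard : Multiset.card A + Multiset.card B = 2 * k - 1) :
    A = Multiset.replicate (k - 1) k ∧ B = Multiset.replicate k (k - 1) := by
  obtain ⟨b, hb⟩ := Multiset.exists_mem_of_ne_zero h.2.1
  have hcardA := (h.eq_pred_and_card_eq_pred hA hB hcard hb).2
  have hB' : B = Multiset.replicate k (k - 1) := Multiset.eq_replicate.2
    ⟨by omega, fun b hb => (h.eq_pred_and_card_eq_pred hA hB hcard hb).1⟩
  refine ⟨?_, hB'⟩
  rw [← hcardA]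
  refine Multiset.eq_replicate_of_sum_eq hA ?_
  rw [h.2.2.2.2.1, hB', Multiset.sum_replicate, smul_eq_mul, hcardA, mul_comm]

theorem stmt7_general (k : ℕ) (A B : Multiset ℕ) (h : KIrredPair k A B) :
    Multiset.card A + Multiset.card B = 2 * k - 1 ↔
      ((A = Multiset.replicate (k - 1) k ∧ B = Multiset.replicate k (k - 1)) ∨
       (A = Multiset.replicate k (k - 1) ∧ B = Multiset.replicate (k - 1) k)) := by
  obtain ⟨hirr, hA, hB⟩ := h
  refine ⟨fun hcard => ?_, ?_⟩
  · by_cases hkA : k ∈ A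
    · by_cases hkB : k ∈ B
      · obtain ⟨rfl, rfl⟩ := hirr.eq_singleton_of_mem_of_mem hkA hkB
        simp only [Multiset.card_singleton] at hcard
        omega
      · exact Or.inl (hirr.eq_replicate_of_forall_lt hA
          (fun b hb => (hB b hb).lt_of_ne (ne_of_mem_of_not_mem hb hkB)) hcard)
    · obtain ⟨hB', hA'⟩ := hirr.symm.eq_replicate_of_forall_lt hB
        (fun a ha => (hA a ha).lt_of_ne (ne_of_mem_of_not_mem ha hkA)) (by omega)
      exact Or.inr ⟨hA', hB'⟩
  · rintro (⟨rfl, rfl⟩ | ⟨rfl, rfl⟩) <;> simp only [Multiset.card_replicate] <;> omega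

theorem stmt7 (k : ℕ) (hk : 1 < k) (A B : Multiset ℕ) (h : KIrredPair k A B) :
    Multiset.card A + Multiset.card B = 2 * k - 1 ↔
      ((A = Multiset.replicate (k - 1) k ∧ B = Multiset.replicate k (k - 1)) ∨
       (A = Multiset.replicate k (k - 1) ∧ B = Multiset.replicate (k - 1) k)) :=
  stmt7_general k A B h
end

section
/- Let k > 1. Every zero-sum sequence with terms in [−k,k] \ {0} and length greater than 2k − 1 contains a proper nonempty zero-sum subsequence. -/
private lemma sum_nonpos' (S : Multiset ℤ) (h : ∀ x ∈ S, x ≤ 0) : S.sum ≤ 0 := by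
  induction S using Multiset.induction with
  | empty => simp
  | cons a s ih =>
    simp only [Multiset.sum_cons]
    have := h a (Multiset.mem_cons_self a s)
    have := ih (fun x hx => h x (Multiset.mem_cons_of_mem hx))
    omega

private lemma sum_nonneg' (S : Multiset ℤ) (h : ∀ x ∈ S, 0 ≤ x) : 0 ≤ S.sum := by
  induction S using Multiset.induction with
  | empty => simp
  | cons a s ih =>
    simp only [Multiset.sum_cons]
    have := h a (Multiset.mem_cons_self a s)
    have := ih (fun x hx => h x (Multiset.mem_cons_of_mem hx))
    omega

private lemma exists_neg' (S : Multiset ℤ) (hS : S.sum < 0) : ∃ y ∈ S, y < 0 := by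
  by_contra h
  push_neg at h
  exact absurd (sum_nonneg' S h) (by omega)

private lemma exists_pos' (S : Multiset ℤ) (hS : 0 < S.sum) : ∃ y ∈ S, 0 < y := by
  by_contra h
  push_neg at h
  exact absurd (sum_nonpos' S h) (by omega)

private lemma exists_pos_mem (S : Multiset ℤ) (hS : S ≠ 0) (h0 : ∀ x ∈ S, x ≠ 0)
    (hs : S.sum = 0) : ∃ x ∈ S, 0 < x := by
  obtain ⟨a, ha⟩ := Multiset.exists_mem_of_ne_zero hS
  rcases (h0 a ha).lt_or_gt with hneg | hpos
  · have hRR := Multiset.cons_erase ha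
    have hsum' : a + (S.erase a).sum = 0 := by
      have : (a ::ₘ S.erase a).sum = S.sum := by rw [hRR]
      simp [Multiset.sum_cons] at this
      omega
    obtain ⟨y, hy, hy'⟩ := exists_pos' (S.erase a) (by omega)
    exact ⟨y, Multiset.mem_of_mem_erase hy, hy'⟩
  · exact ⟨a, ha, hpos⟩

private lemma exists_neg_mem (S : Multiset ℤ) (hS : S ≠ 0) (h0 : ∀ x ∈ S, x ≠ 0)
    (hs : S.sum = 0) : ∃ x ∈ S, x < 0 := by
  obtain ⟨a, ha⟩ := Multiset.exists_mem_of_ne_zero hS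
  rcases (h0 a ha).lt_or_gt with hneg | hpos
  · exact ⟨a, ha, hneg⟩
  · have hRR := Multiset.cons_erase ha
    have hsum' : a + (S.erase a).sum = 0 := by
      have : (a ::ₘ S.erase a).sum = S.sum := by rw [hRR]
      simp [Multiset.sum_cons] at this
      omega
    obtain ⟨y, hy, hy'⟩ := exists_neg' (S.erase a) (by omega)
    exact ⟨y, Multiset.mem_of_mem_erase hy, hy'⟩

/-- Greedy ordering lemma: a multiset with bounded nonzero entries and running total
`t` summing to zero can be listed so that either some intermediate prefix sum hits 0,
or all intermediate prefix sums stay within `[-(K-1), K-1]`. -/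
private lemma greedy (K : ℤ) : ∀ n : ℕ, ∀ R : Multiset ℤ, Multiset.card R = n →
    (∀ x ∈ R, x ≠ 0 ∧ |x| ≤ K) → ∀ t : ℤ, t + R.sum = 0 → t ≠ 0 → |t| ≤ K - 1 →
    ∃ L : List ℤ, (L : Multiset ℤ) = R ∧
      ((∃ i, 0 < i ∧ i < L.length ∧ t + (L.take i).sum = 0) ∨
       ∀ i, 0 < i → i < L.length → |t + (L.take i).sum| ≤ K - 1) := by
  intro n
  induction n using Nat.strong_induction_on with
  | _ n IH =>
    intro R hcard hmem t hts ht0 htK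
    rcases eq_or_ne R 0 with rfl | hR
    · exact ⟨[], rfl, Or.inr (fun i hi hil => absurd hil (by simp))⟩
    -- pick an element of sign opposite to t
    have hy : ∃ y ∈ R, t * y < 0 := by
      rcases ht0.lt_or_gt with htneg | htpos
      · obtain ⟨y, hyR, hy⟩ := exists_pos' R (by omega)
        exact ⟨y, hyR, mul_neg_of_neg_of_pos htneg hy⟩
      · obtain ⟨y, hyR, hy⟩ := exists_neg' R (by omega)
        exact ⟨y, hyR, mul_neg_of_pos_of_neg htpos hy⟩
    obtain ⟨y, hyR, hty⟩ := hy
    set R' := R.erase y with hR'def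
    have hRR : y ::ₘ R' = R := Multiset.cons_erase hyR
    have hyK : |y| ≤ K := (hmem y hyR).2
    have ht'K : |t + y| ≤ K - 1 := by
      rcases abs_le.mp htK with ⟨h1, h2⟩
      rcases abs_le.mp hyK with ⟨h3, h4⟩
      rw [abs_le]
      rcases ht0.lt_or_gt with htneg | htpos
      · have : 0 < y := by nlinarith
        omega
      · have : y < 0 := by nlinarith
        omega
    have hcard' : Multiset.card R' = n - 1 := by
      have := congrArg Multiset.card hRR
      simp at this
      omega
    have hn1 : 1 ≤ n := by
      have := congrArg Multiset.card hRR
      simp at this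
      omega
    have hmem' : ∀ x ∈ R', x ≠ 0 ∧ |x| ≤ K := fun x hx => hmem x (Multiset.mem_of_mem_erase hx)
    have hts' : (t + y) + R'.sum = 0 := by
      have : (y ::ₘ R').sum = R.sum := by rw [hRR]
      simp [Multiset.sum_cons] at this
      omega
    rcases eq_or_ne R' 0 with hR'0 | hR'ne
    · refine ⟨[y], by rw [← hRR, hR'0]; rfl, Or.inr (fun i hi hil => ?_)⟩
      simp only [List.length_singleton] at hil
      omega
    rcases eq_or_ne (t + y) 0 with ht' | ht'
    · refine ⟨y :: R'.toList, ?_, Or.inl ⟨1, one_pos, ?_, ?_⟩⟩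
      · rw [← hRR, ← Multiset.cons_coe, Multiset.coe_toList]
      · simp only [List.length_cons]
        have hne : R'.toList ≠ [] := by
          intro h
          apply hR'ne
          rw [← Multiset.coe_toList R', h]
          rfl
        have := List.length_pos_iff.mpr hne
        omega
      · simp [ht']
    · obtain ⟨L', hL', hdisj⟩ := IH (n - 1) (by omega) R' hcard' hmem' (t + y) hts' ht' ht'K
      refine ⟨y :: L', by rw [← hRR, ← hL']; rfl, ?_⟩
      have htake : ∀ j : ℕ, ((y :: L').take (j + 1)).sum = y + (L'.take j).sum := by
        intro j
        simp [List.take_succ_cons]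
      rcases hdisj with ⟨j, hj0, hjl, hjz⟩ | h2
      · refine Or.inl ⟨j + 1, by omega, by simp only [List.length_cons]; omega, ?_⟩
        rw [htake j]
        omega
      · refine Or.inr (fun i hi hil => ?_)
        obtain ⟨j, rfl⟩ : ∃ j, i = j + 1 := ⟨i - 1, by omega⟩
        rw [htake j, show t + (y + (L'.take j).sum) = (t + y) + (L'.take j).sum by ring]
        rcases Nat.eq_zero_or_pos j with rfl | hj
        · simpa using ht'K
        · exact h2 j hj (by simp only [List.length_cons] at hil; omega)

/-- A nonempty proper prefix with zero sum gives the conclusion. -/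
private lemma prefix_win (S : Multiset ℤ) (L : List ℤ) (hL : (L : Multiset ℤ) = S)
    (i : ℕ) (hi0 : 0 < i) (hil : i < L.length) (hz : (L.take i).sum = 0) :
    ∃ T : Multiset ℤ, T ≤ S ∧ T ≠ 0 ∧ T ≠ S ∧ T.sum = 0 := by
  refine ⟨↑(L.take i), ?_, ?_, ?_, by simpa using hz⟩
  · rw [← hL]
    exact Multiset.coe_le.mpr (List.take_prefix i L).sublist.subperm
  · intro h
    have := congrArg Multiset.card h
    simp only [Multiset.coe_card, List.length_take, Multiset.card_zero] at this
    omega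
  · intro h
    have := congrArg Multiset.card h
    rw [← hL] at this
    simp only [Multiset.coe_card, List.length_take] at this
    omega

/-- Two equal nonzero-position prefix sums give a zero-sum infix, hence the conclusion. -/
private lemma infix_win (S : Multiset ℤ) (L : List ℤ) (hL : (L : Multiset ℤ) = S)
    (a b : ℕ) (ha : 0 < a) (hab : a < b) (hb : b < L.length)
    (hz : (L.take a).sum = (L.take b).sum) :
    ∃ T : Multiset ℤ, T ≤ S ∧ T ≠ 0 ∧ T ≠ S ∧ T.sum = 0 := by
  refine ⟨↑((L.take b).drop a), ?_, ?_, ?_, ?_⟩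
  · rw [← hL]
    exact Multiset.coe_le.mpr
      ((List.drop_suffix a (L.take b)).sublist.trans (List.take_prefix b L).sublist).subperm
  · intro h
    have := congrArg Multiset.card h
    simp only [Multiset.coe_card, List.length_drop, List.length_take, Multiset.card_zero] at this
    omega
  · intro h
    have := congrArg Multiset.card h
    rw [← hL] at this
    simp only [Multiset.coe_card, List.length_drop, List.length_take] at this
    omega
  · have h1 := List.sum_take_add_sum_drop (L.take b) a
    rw [List.take_take, min_eq_left hab.le] at h1
    have : ((L.take b).drop a).sum = (L.take b).sum - (L.take a).sum := by omega
    rw [Multiset.sum_coe, this]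
    omega


theorem stmt9 (k : ℕ) (hk : 1 < k) (S : Multiset ℤ)
    (hmem : ∀ x ∈ S, x ≠ 0 ∧ |x| ≤ (k : ℤ))
    (hsum : S.sum = 0)
    (hlen : 2 * k - 1 < Multiset.card S) :
    ∃ T : Multiset ℤ, T ≤ S ∧ T ≠ 0 ∧ T ≠ S ∧ T.sum = 0 := by
  set K : ℤ := (k : ℤ) with hKdef
  have hK2 : 2 ≤ K := by omega
  have hcS : 2 * k ≤ Multiset.card S := by omega
  have hSne : S ≠ 0 := by
    intro h
    rw [h] at hcS
    simp only [Multiset.card_zero] at hcS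
    omega
  have h0 : ∀ x ∈ S, x ≠ 0 := fun x hx => (hmem x hx).1
  by_cases hA : ∃ x ∈ S, |x| < K
  case neg =>
    -- all entries are ±K; take T = {K, -K}
    push_neg at hA
    have habs : ∀ x ∈ S, x = K ∨ x = -K := by
      intro x hx
      have h1 := (hmem x hx).2
      have h2 := hA x hx
      rcases abs_le.mp h1 with ⟨ha, hb⟩
      rcases le_abs.mp h2 with h | h
      · left; omega
      · right; omega
    obtain ⟨xp, hxpS, hxp⟩ := exists_pos_mem S hSne h0 hsum
    obtain ⟨xn, hxnS, hxn⟩ := exists_neg_mem S hSne h0 hsum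
    have hxpK : xp = K := by rcases habs xp hxpS with rfl | rfl <;> omega
    have hxnK : xn = -K := by rcases habs xn hxnS with rfl | rfl <;> omega
    subst hxpK hxnK
    have hKmem' : K ∈ S.erase (-K) := by
      rw [Multiset.mem_erase_of_ne (by omega)]
      exact hxpS
    refine ⟨(-K) ::ₘ {K}, ?_, by simp, ?_, by simp⟩
    · rw [← Multiset.cons_erase hxnS]
      exact Multiset.cons_le_cons _ (Multiset.singleton_le.mpr hKmem')
    · intro h
      have := congrArg Multiset.card h
      simp only [Multiset.card_cons, Multiset.card_singleton] at this
      omega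
  case pos =>
    obtain ⟨x, hxS, hxK⟩ := hA
    have hx0 : x ≠ 0 := (hmem x hxS).1
    set R : Multiset ℤ := S.erase x with hRdef
    have hRR : x ::ₘ R = S := Multiset.cons_erase hxS
    have hcR : Multiset.card R = Multiset.card S - 1 := by
      have := congrArg Multiset.card hRR
      simp only [Multiset.card_cons] at this
      omega
    have hmem' : ∀ z ∈ R, z ≠ 0 ∧ |z| ≤ K := fun z hz => hmem z (Multiset.mem_of_mem_erase hz)
    have hts : x + R.sum = 0 := by
      have : (x ::ₘ R).sum = S.sum := by rw [hRR]
      simp only [Multiset.sum_cons] at this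
      omega
    have hxK1 : |x| ≤ K - 1 := by omega
    obtain ⟨L', hL', hdisj⟩ :=
      greedy K (Multiset.card R) R rfl hmem' x hts hx0 hxK1
    set L : List ℤ := x :: L' with hLdef
    have hLS : (L : Multiset ℤ) = S := by rw [hLdef, ← Multiset.cons_coe, hL', hRR]
    have hlenL : L.length = Multiset.card S := by
      have := congrArg Multiset.card hLS
      simpa using this
    have htake : ∀ j : ℕ, (L.take (j + 1)).sum = x + (L'.take j).sum := by
      intro j
      simp [hLdef, List.take_succ_cons]
    rcases hdisj with ⟨j, hj0, hjl, hjz⟩ | h2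
    · -- zero prefix found inside greedy
      refine prefix_win S L hLS (j + 1) (by omega) ?_ ?_
      · simp only [hLdef, List.length_cons]; omega
      · rw [htake j]; omega
    · by_cases hzero : ∃ i, 0 < i ∧ i < L.length ∧ (L.take i).sum = 0
      · obtain ⟨i, hi0, hil, hiz⟩ := hzero
        exact prefix_win S L hLS i hi0 hil hiz
      · push_neg at hzero
        have hbound : ∀ i, 0 < i → i < L.length → |(L.take i).sum| ≤ K - 1 := by
          intro i hi0 hil
          obtain ⟨j, rfl⟩ : ∃ j, i = j + 1 := ⟨i - 1, by omega⟩
          rw [htake j]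
          rcases Nat.eq_zero_or_pos j with rfl | hj
          · simpa using hxK1
          · have := h2 j hj (by simp only [hLdef, List.length_cons] at hil ⊢; omega)
            omega
        -- pigeonhole among prefix sums
        have hmaps : ∀ i ∈ Finset.Ico 1 L.length,
            (L.take i).sum ∈ (Finset.Icc (1 - K) (K - 1)).erase 0 := by
          intro i hi
          rw [Finset.mem_Ico] at hi
          rw [Finset.mem_erase, Finset.mem_Icc]
          have hb := hbound i (by omega) hi.2
          rcases abs_le.mp hb with ⟨hb1, hb2⟩
          exact ⟨hzero i (by omega) hi.2, by omega, hb2⟩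
        have hcards : ((Finset.Icc (1 - K) (K - 1)).erase 0).card < (Finset.Ico 1 L.length).card := by
          have h0mem : (0 : ℤ) ∈ Finset.Icc (1 - K) (K - 1) := by
            rw [Finset.mem_Icc]; omega
          rw [Finset.card_erase_of_mem h0mem, Int.card_Icc, Nat.card_Ico]
          have : (K - 1 + 1 - (1 - K)).toNat = 2 * k - 1 := by omega
          rw [this]
          omega
        obtain ⟨a, haM, b, hbM, hne, heq⟩ :=
          Finset.exists_ne_map_eq_of_card_lt_of_maps_to hcards hmaps
        rw [Finset.mem_Ico] at haM hbM
        rcases hne.lt_or_gt with hab | hab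
        · exact infix_win S L hLS a b (by omega) hab hbM.2 heq
        · exact infix_win S L hLS b a (by omega) hab haM.2 heq.symm
end

section
/- Let k > 1. For every irreducible zero-sum sequence with terms in [−k,k] \ {0} containing at least one positive and one negative term of distinct absolute values, the number of positive terms is at most the largest absolute value among the negative terms, and the number of negative terms is at most the largest positive term. -/
lemma le_msetMax_s12 (S : Multiset ℕ) : ∀ a ∈ S, a ≤ msetMax S := by
  induction S using Multiset.induction with
  | empty => simp
  | cons b s ih =>
    intro a ha
    rw [msetMax, Multiset.fold_cons_left]
    rcases Multiset.mem_cons.1 ha with rfl | h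
    · exact le_max_left _ _
    · exact le_trans (ih a h) (le_max_right _ _)

lemma list_sum_map_neg (t : List ℤ) : (t.map (fun x => -x)).sum = -t.sum := by
  induction t with
  | nil => simp
  | cons a s ih => simp [ih]; ring

lemma sum_take_le (L : List ℤ) (hL : ∀ x ∈ L, 0 < x) {i j : ℕ} (hij : i ≤ j) :
    (L.take i).sum ≤ (L.take j).sum := by
  rcases Nat.exists_eq_add_of_le hij with ⟨d, rfl⟩
  rw [List.take_add, List.sum_append]
  have h2 : 0 ≤ (List.take d (List.drop i L)).sum :=
    List.sum_nonneg (fun x hx => le_of_lt (hL x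
      (((List.take_sublist _ _).trans (List.drop_sublist _ _)).subset hx)))
  omega

lemma sum_take_lt (L : List ℤ) (hL : ∀ x ∈ L, 0 < x) {i j : ℕ} (hij : i < j)
    (hj : j ≤ L.length) : (L.take i).sum < (L.take j).sum := by
  have h1 : (L.take (i + 1)).sum ≤ (L.take j).sum := sum_take_le L hL hij
  have hi : i < L.length := lt_of_lt_of_le hij hj
  rw [List.sum_take_succ L i hi] at h1
  have h2 := hL (L[i]) (List.getElem_mem hi)
  omega

lemma sum_take_le_sum (L : List ℤ) (hL : ∀ x ∈ L, 0 < x) (i : ℕ) :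
    (L.take i).sum ≤ L.sum := by
  have h1 : (L.take i).sum + (L.drop i).sum = L.sum := by
    rw [← List.sum_append, List.take_append_drop]
  have h2 : 0 ≤ (L.drop i).sum :=
    List.sum_nonneg (fun x hx => le_of_lt (hL x ((List.drop_sublist _ _).subset hx)))
  omega

lemma core (τ : Multiset ℤ) (hmem : ∀ x ∈ τ, x ≠ 0)
    (hsum : τ.sum = 0) (hirr : IrredZeroSum τ)
    (hBne : τ.filter (fun x => x < 0) ≠ 0) :
    Multiset.card (τ.filter (fun x => 0 < x)) ≤
      msetMax ((τ.filter (fun x => x < 0)).map (fun x => (-x).toNat)) := by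
  classical
  set A := τ.filter (fun x => 0 < x) with hAdef
  set B := τ.filter (fun x => x < 0) with hBdef
  set L := A.toList with hLdef
  set M := B.toList with hMdef
  set m := L.length with hmdef
  set l := M.length with hldef
  set b := msetMax (B.map (fun x => (-x).toNat)) with hbdef
  have hLpos : ∀ x ∈ L, 0 < x := by
    intro x hx
    exact (Multiset.mem_filter.1 (hAdef ▸ Multiset.mem_toList.1 hx)).2
  have hMneg : ∀ x ∈ M, x < 0 := by
    intro x hx
    have hx' : x ∈ Multiset.filter (fun x => x < 0) τ := hBdef ▸ Multiset.mem_toList.1 hx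
    exact (Multiset.mem_filter.1 hx').2
  have hABτ : A + B = τ := by
    have hcongr : B = τ.filter (fun x => ¬ 0 < x) := by
      rw [hBdef]
      exact Multiset.filter_congr (fun x hx => by
        have := hmem x hx; constructor <;> intro <;> omega)
    rw [hcongr, hAdef]
    exact Multiset.filter_add_not _ τ
  have hLMsum : L.sum + M.sum = 0 := by
    rw [hLdef, hMdef, Multiset.sum_toList, Multiset.sum_toList, ← Multiset.sum_add, hABτ, hsum]
  set M' : List ℤ := M.map (fun x => -x) with hM'def
  have hM'pos : ∀ x ∈ M', 0 < x := by
    intro x hx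
    rw [hM'def, List.mem_map] at hx
    obtain ⟨y, hy, rfl⟩ := hx
    have := hMneg y hy; omega
  have hM'len : M'.length = l := by rw [hM'def, List.length_map]
  have hQM : ∀ j : ℕ, (M'.take j).sum = -((M.take j).sum) := by
    intro j
    rw [hM'def, ← List.map_take, list_sum_map_neg]
  have hQl : (M'.take l).sum = L.sum := by
    have h : M'.take l = M' := List.take_of_length_le (le_of_eq hM'len)
    rw [h, hM'def, list_sum_map_neg]
    omega
  have hex : ∀ i : ℕ, ∃ j, j ≤ l ∧ (L.take i).sum ≤ (M'.take j).sum := by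
    intro i
    exact ⟨l, le_rfl, by rw [hQl]; exact sum_take_le_sum L hLpos i⟩
  have hbpos : 0 < b := by
    obtain ⟨y, hy⟩ := Multiset.exists_mem_of_ne_zero hBne
    have hy' : y < 0 := (Multiset.mem_filter.1 hy).2
    have hmem' : (-y).toNat ∈ B.map (fun x => (-x).toNat) :=
      Multiset.mem_map_of_mem _ (hBdef ▸ hy)
    have := le_msetMax_s12 _ _ hmem'
    omega
  have hM'le : ∀ x ∈ M', x ≤ (b : ℤ) := by
    intro x hx
    rw [hM'def, List.mem_map] at hx
    obtain ⟨y, hy, rfl⟩ := hx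
    have hy' : y < 0 := hMneg y hy
    have hmem' : (-y).toNat ∈ B.map (fun x => (-x).toNat) :=
      Multiset.mem_map_of_mem _ (Multiset.mem_toList.1 hy)
    have := le_msetMax_s12 _ _ hmem'
    omega
  have hfind : ∀ i : ℕ,
      Nat.find (hex i) ≤ l ∧ (L.take i).sum ≤ (M'.take (Nat.find (hex i))).sum :=
    fun i => Nat.find_spec (hex i)
  have hmaps : ∀ i ∈ Finset.range m,
      ((M'.take (Nat.find (hex i))).sum - (L.take i).sum).toNat ∈ Finset.range b := by
    intro i hi
    rw [Finset.mem_range] at hi ⊢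
    obtain ⟨hle, hge⟩ := hfind i
    rcases Nat.eq_zero_or_pos (Nat.find (hex i)) with h0 | hposn
    · rw [h0]
      rcases Nat.eq_zero_or_pos i with rfl | hipos
      · simpa using hbpos
      · exfalso
        have hlt : (L.take 0).sum < (L.take i).sum :=
          sum_take_lt L hLpos hipos (le_of_lt hi)
        rw [h0] at hge
        simp only [List.take_zero, List.sum_nil] at hlt hge
        omega
    · obtain ⟨j, hj⟩ : ∃ j, Nat.find (hex i) = j + 1 := ⟨Nat.find (hex i) - 1, by omega⟩
      have hjl : j < l := by omega
      have hmin : ¬ (j ≤ l ∧ (L.take i).sum ≤ (M'.take j).sum) :=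
        Nat.find_min (hex i) (by omega)
      have hQj : (M'.take j).sum < (L.take i).sum := by
        by_contra hcon
        exact hmin ⟨le_of_lt hjl, by omega⟩
      have hjM' : j < M'.length := by omega
      have hstep : (M'.take (j + 1)).sum = (M'.take j).sum + M'[j] :=
        List.sum_take_succ M' j hjM'
      have hMb : M'[j] ≤ (b : ℤ) := hM'le _ (List.getElem_mem hjM')
      rw [hj]
      omega
  have hkey : ∀ i i', i < i' → i' < m →
      ((M'.take (Nat.find (hex i))).sum - (L.take i).sum).toNat ≠
        ((M'.take (Nat.find (hex i'))).sum - (L.take i').sum).toNat := by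
    intro i i' hii' hi'm hfe
    obtain ⟨hnl, hnP⟩ := hfind i
    obtain ⟨hn'l, hn'P⟩ := hfind i'
    set n := Nat.find (hex i) with hndef
    set n' := Nat.find (hex i') with hn'def
    have hPmono : (L.take i).sum ≤ (L.take i').sum := sum_take_le L hLpos (le_of_lt hii')
    have hnn' : n ≤ n' := Nat.find_min' (hex i) ⟨hn'l, le_trans hPmono hn'P⟩
    have heq : (M'.take n').sum - (L.take i').sum = (M'.take n).sum - (L.take i).sum := by
      omega
    have hPlt : (L.take i).sum < (L.take i').sum :=
      sum_take_lt L hLpos hii' (le_of_lt hi'm)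
    have hnltn' : n < n' := by
      by_contra hcon
      have : (M'.take n').sum ≤ (M'.take n).sum := sum_take_le M' hM'pos (by omega)
      omega
    set SA := (L.drop i).take (i' - i) with hSAdef
    set SB := (M.drop n).take (n' - n) with hSBdef
    have hSAsum : (L.take i).sum + SA.sum = (L.take i').sum := by
      rw [← List.sum_append, hSAdef, ← List.take_add, Nat.add_sub_cancel' (le_of_lt hii')]
    have hSBsum : (M.take n).sum + SB.sum = (M.take n').sum := by
      rw [← List.sum_append, hSBdef, ← List.take_add, Nat.add_sub_cancel' (le_of_lt hnltn')]
    have hQn := hQM n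
    have hQn' := hQM n'
    set T : Multiset ℤ := (↑SA : Multiset ℤ) + ↑SB with hTdef
    apply hirr
    refine ⟨T, ?_, ?_, ?_, ?_⟩
    · have h1 : (↑SA : Multiset ℤ) ≤ A := by
        have hs : SA.Sublist L := (List.take_sublist _ _).trans (List.drop_sublist _ _)
        have h2 : (↑SA : Multiset ℤ) ≤ ↑L := Multiset.coe_le.2 hs.subperm
        rwa [hLdef, Multiset.coe_toList] at h2
      have h2 : (↑SB : Multiset ℤ) ≤ B := by
        have hs : SB.Sublist M := (List.take_sublist _ _).trans (List.drop_sublist _ _)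
        have h2 : (↑SB : Multiset ℤ) ≤ ↑M := Multiset.coe_le.2 hs.subperm
        rwa [hMdef, Multiset.coe_toList] at h2
      calc T ≤ A + B := add_le_add h1 h2
      _ = τ := hABτ
    · have hlen : SA.length = i' - i := by
        rw [hSAdef, List.length_take, List.length_drop]
        omega
      intro h0
      have hc : Multiset.card T = 0 := by rw [h0]; simp
      rw [hTdef, Multiset.card_add, Multiset.coe_card, Multiset.coe_card, hlen] at hc
      omega
    · intro heqτ
      have hcτ : Multiset.card τ = m + l := by
        rw [← hABτ, Multiset.card_add, hmdef, hldef, hLdef, hMdef,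
          Multiset.length_toList, Multiset.length_toList]
      have hcT : Multiset.card T = SA.length + SB.length := by
        rw [hTdef, Multiset.card_add, Multiset.coe_card, Multiset.coe_card]
      have hlenA : SA.length = i' - i := by
        rw [hSAdef, List.length_take, List.length_drop]; omega
      have hlenB : SB.length ≤ l := by
        rw [hSBdef, List.length_take, List.length_drop]; omega
      rw [heqτ, hcτ, hlenA] at hcT
      omega
    · rw [hTdef, Multiset.sum_add, Multiset.sum_coe, Multiset.sum_coe]
      omega
  have hcardA : Multiset.card A = m := by
    rw [hmdef, hLdef, Multiset.length_toList]
  rw [hcardA]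
  have h := Finset.card_le_card_of_injOn
      (fun i => ((M'.take (Nat.find (hex i))).sum - (L.take i).sum).toNat) hmaps (by
    intro x hx y hy hxy
    simp only [Finset.coe_range, Set.mem_Iio] at hx hy
    by_contra hne
    rcases lt_or_gt_of_ne hne with h | h
    · exact hkey x y h hy hxy
    · exact hkey y x h hx hxy.symm)
  simpa using h

theorem stmt12 (k : ℕ) (hk : 1 < k) (τ : Multiset ℤ)
    (hmem : ∀ x ∈ τ, x ≠ 0 ∧ |x| ≤ (k : ℤ))
    (hsum : τ.sum = 0) (hirr : IrredZeroSum τ)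
    (hpos : ∃ a ∈ τ, ∃ b ∈ τ, 0 < a ∧ b < 0 ∧ a ≠ -b) :
    Multiset.card (τ.filter (fun x => 0 < x)) ≤
      msetMax ((τ.filter (fun x => x < 0)).map (fun x => (-x).toNat)) ∧
    Multiset.card (τ.filter (fun x => x < 0)) ≤
      msetMax ((τ.filter (fun x => 0 < x)).map Int.toNat) := by
  classical
  obtain ⟨a, haτ, bb, hbτ, hapos, hbneg, -⟩ := hpos
  constructor
  · apply core τ (fun x hx => (hmem x hx).1) hsum hirr
    intro h
    have hmem2 : bb ∈ τ.filter (fun x => x < 0) := Multiset.mem_filter.2 ⟨hbτ, hbneg⟩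
    rw [h] at hmem2
    simp at hmem2
  · set τ' : Multiset ℤ := τ.map (fun x => -x) with hτ'def
    have hmem' : ∀ x ∈ τ', x ≠ 0 := by
      intro x hx
      rw [hτ'def, Multiset.mem_map] at hx
      obtain ⟨y, hy, rfl⟩ := hx
      have := (hmem y hy).1
      omega
    have hsum' : τ'.sum = 0 := by
      rw [hτ'def, Multiset.sum_map_neg', hsum, neg_zero]
    have hnegneg : ((fun x : ℤ => -x) ∘ fun x : ℤ => -x) = id := by
      funext x; simp
    have hirr' : IrredZeroSum τ' := by
      rintro ⟨T, hTle, hT0, hTne, hTsum⟩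
      apply hirr
      refine ⟨T.map (fun x => -x), ?_, ?_, ?_, ?_⟩
      · have h1 := Multiset.map_le_map (f := fun x : ℤ => -x) hTle
        rwa [hτ'def, Multiset.map_map, hnegneg, Multiset.map_id] at h1
      · rw [Ne, Multiset.map_eq_zero]; exact hT0
      · intro h
        apply hTne
        have h2 := congrArg (Multiset.map (fun x : ℤ => -x)) h
        rwa [Multiset.map_map, hnegneg, Multiset.map_id] at h2
      · rw [Multiset.sum_map_neg', hTsum, neg_zero]
    have hBne' : τ'.filter (fun x => x < 0) ≠ 0 := by
      intro h
      have hmem2 : -a ∈ τ'.filter (fun x => x < 0) :=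
        Multiset.mem_filter.2 ⟨Multiset.mem_map_of_mem _ haτ, by omega⟩
      rw [h] at hmem2
      simp at hmem2
    have h2 := core τ' hmem' hsum' hirr' hBne'
    have hfilt1 : τ'.filter (fun x => 0 < x) = (τ.filter (fun x => x < 0)).map (fun x => -x) := by
      rw [hτ'def, Multiset.filter_map]
      congr 1
      exact Multiset.filter_congr (fun x hx => by simp [Function.comp])
    have hfilt2 : τ'.filter (fun x => x < 0) = (τ.filter (fun x => 0 < x)).map (fun x => -x) := by
      rw [hτ'def, Multiset.filter_map]
      congr 1
      exact Multiset.filter_congr (fun x hx => by simp [Function.comp])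
    rw [hfilt1, hfilt2, Multiset.card_map, Multiset.map_map] at h2
    have hmapeq : Multiset.map ((fun x : ℤ => (-x).toNat) ∘ fun x : ℤ => -x)
        (τ.filter (fun x => 0 < x)) = Multiset.map Int.toNat (τ.filter (fun x => 0 < x)) :=
      Multiset.map_congr rfl (fun x hx => by simp [Function.comp])
    rw [hmapeq] at h2
    exact h2
end

section
/- Let {A,B} be a k-irreducible pair with ΣA = ΣB, a ∈ A with a = max(A ∪ B), b ∈ B, a > b, and suppose the multiplicity of b in B is strictly greater than the multiplicity x of a in A. Then the pair {C,D}, obtained by replacing all x copies of a in A by x copies of a − b and deleting x copies of b from B, is k-irreducible. -/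
/-!
With `c = a - b` and `x` the multiplicity of `a`, write `A = F + x·{c + b}` and `B = D + x·{b}`.
An equal-sum pair of nonempty proper submultisets `C₁ + j·{c}` of `F + x·{c}` and `D'` of `D`
lifts, by adding `j·b` to both sides, to the equal-sum pair `C₁ + j·{c + b}`, `D' + j·{b}` of
nonempty proper submultisets of `A` and `B`.
-/

namespace Multiset

variable {α : Type*}

theorem exists_eq_add_replicate_of_le_add_replicate [DecidableEq α] {s t : Multiset α} {n : ℕ}
    {a : α} (h : s ≤ t + replicate n a) : ∃ u ≤ t, ∃ j ≤ n, s = u + replicate j a := by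
  have hrest : s - s ∩ t ≤ replicate n a := by
    rw [sub_inter, tsub_le_iff_left]
    exact h
  obtain ⟨j, hj, hrep⟩ := le_replicate_iff.mp hrest
  exact ⟨s ∩ t, inter_le_right, j, hj, by rw [← hrep, add_tsub_cancel_of_le inter_le_left]⟩

theorem add_replicate_lt_add_replicate {u t : Multiset α} {j n : ℕ} {a : α} (d : α)
    (hu : u ≤ t) (hj : j ≤ n) (hlt : u + replicate j a < t + replicate n a) :
    u + replicate j d < t + replicate n d := by
  rcases hu.lt_or_eq with hu | rfl
  · exact add_lt_add_of_lt_of_le hu (replicate_mono _ hj)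
  · rcases hj.lt_or_eq with hj | rfl
    · refine add_lt_add_of_le_of_lt le_rfl (lt_of_le_of_ne (replicate_mono _ hj.le) fun h => ?_)
      exact hj.ne (by simpa using congrArg card h)
    · exact absurd hlt (lt_irrefl _)

theorem filter_ne_add_replicate_count [DecidableEq α] (s : Multiset α) (a : α) :
    s.filter (· ≠ a) + replicate (s.count a) a = s := by
  rw [← filter_eq', add_comm]
  exact filter_add_not _ s

end Multiset

section Derivation

open Multiset

variable {F D : Multiset ℕ} {x b c : ℕ}

theorem IrredPair.of_derivation (h : IrredPair (F + replicate x (c + b)) (D + replicate x b))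
    (hc : 0 < c) (hD : D ≠ 0) : IrredPair (F + replicate x c) D := by
  obtain ⟨hA0, -, hApos, hBpos, hsum, hirr⟩ := h
  refine ⟨?_, hD, ?_, fun y hy => hBpos y (mem_add.mpr (Or.inl hy)), ?_, ?_⟩
  · rintro h0
    obtain ⟨rfl, hx⟩ := add_eq_zero.mp h0
    obtain rfl : x = 0 := by simpa using congrArg card hx
    exact hA0 (by simp)
  · intro y hy
    rcases mem_add.mp hy with hy | hy
    · exact hApos y (mem_add.mpr (Or.inl hy))
    · exact (eq_of_mem_replicate hy) ▸ hc
  · simp only [sum_add, sum_replicate, smul_eq_mul, mul_add] at hsum ⊢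
    omega
  · intro C' D' hC' hD' hC'0 hD'0 heq
    obtain ⟨u, hu, j, hj, rfl⟩ := exists_eq_add_replicate_of_le_add_replicate hC'.le
    refine hirr (u + replicate j (c + b)) (D' + replicate j b)
      (add_replicate_lt_add_replicate _ hu hj hC') (add_lt_add_of_lt_of_le hD' (replicate_mono _ hj))
      ?_ ?_ ?_
    · rintro h0
      obtain ⟨rfl, hj0⟩ := add_eq_zero.mp h0
      obtain rfl : j = 0 := by simpa using congrArg card hj0
      exact hC'0 (by simp)
    · exact fun h0 => hD'0 (add_eq_zero.mp h0).1
    · simp only [sum_add, sum_replicate, smul_eq_mul, mul_add] at heq ⊢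
      omega

theorem KIrredPair.of_derivation {k : ℕ}
    (h : KIrredPair k (F + replicate x (c + b)) (D + replicate x b))
    (hc : 0 < c) (hD : D ≠ 0) : KIrredPair k (F + replicate x c) D := by
  obtain ⟨hirr, hAk, hBk⟩ := h
  refine ⟨hirr.of_derivation hc hD, fun y hy => ?_, fun y hy => hBk y (mem_add.mpr (Or.inl hy))⟩
  rcases mem_add.mp hy with hy | hy
  · exact hAk y (mem_add.mpr (Or.inl hy))
  · obtain ⟨hx, rfl⟩ := mem_replicate.mp hy
    calc y ≤ y + b := Nat.le_add_right y b
      _ ≤ k := hAk _ (mem_add.mpr (Or.inr (mem_replicate.mpr ⟨hx, rfl⟩)))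

end Derivation

theorem stmt13_general (k : ℕ) (A B : Multiset ℕ) (h : KIrredPair k A B)
    (a b : ℕ) (hab : a > b)
    (hcount : A.count a < B.count b) :
    KIrredPair k (A.filter (fun x => x ≠ a) + Multiset.replicate (A.count a) (a - b))
      (B - Multiset.replicate (A.count a) b) := by
  open Multiset in
  have hA : A = A.filter (fun x => x ≠ a) + replicate (A.count a) (a - b + b) := by
    rw [Nat.sub_add_cancel hab.le, filter_ne_add_replicate_count]
  have hB : B = (B - replicate (A.count a) b) + replicate (A.count a) b :=
    (tsub_add_cancel_of_le (le_count_iff_replicate_le.mp hcount.le)).symm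
  have hD : B - replicate (A.count a) b ≠ 0 := by
    have hbD : b ∈ B - replicate (A.count a) b := by
      rw [← count_pos, count_sub, count_replicate_self]
      omega
    exact fun h0 => by simp [h0] at hbD
  rw [hA, hB] at h
  exact h.of_derivation (by omega) hD

theorem stmt13 (k : ℕ) (A B : Multiset ℕ) (h : KIrredPair k A B)
    (a b : ℕ) (ha : a ∈ A) (hmax : a = msetMax (A + B)) (hb : b ∈ B) (hab : a > b)
    (hcount : A.count a < B.count b) :
    KIrredPair k (A.filter (fun x => x ≠ a) + Multiset.replicate (A.count a) (a - b))
      (B - Multiset.replicate (A.count a) b) :=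
  stmt13_general k A B h a b hab hcount
end
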